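/- (Cleaning Lemma) With the notation of the logical-operator counting proposition: if Σ^⊥ ∩ V_M = Σ ∩ V_M (i.e., ℓ_M = 0, the region M is correctable), then ℓ_{M^c} = 2k; in particular every class in Σ^⊥/Σ has a representative supported on M^c. -/

import Mathlib

open Matrix

/-- The subspace of vectors of `F₂^{2n}` supported on the set `M` of qubits. -/
noncomputable def coordSubspace {n : ℕ} (M : Finset (Fin n)) :
    Submodule (ZMod 2) (Fin n ⊕ Fin n → ZMod 2) :=
  ⨅ i ∈ Mᶜ, (LinearMap.ker (LinearMap.proj (R := ZMod 2) (φ := fun _ : Fin n ⊕ Fin n => ZMod 2) (Sum.inl i)) ⊓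
    LinearMap.ker (LinearMap.proj (R := ZMod 2) (φ := fun _ : Fin n ⊕ Fin n => ZMod 2) (Sum.inr i)))

/-- The standard symplectic form on `F₂^{2n}` (over `F₂`, `−1 = 1`). -/
noncomputable def stdSymplecticForm (n : ℕ) :
    LinearMap.BilinForm (ZMod 2) (Fin n ⊕ Fin n → ZMod 2) :=
  Matrix.toLinearMap₂' (ZMod 2) (Matrix.fromBlocks 0 1 1 0)

/-- `ℓ_M` : the dimension of `(Σ^⊥ ∩ V_M)/(Σ ∩ V_M)`. -/
noncomputable def numLogical {n : ℕ} (Sig : Submodule (ZMod 2) (Fin n ⊕ Fin n → ZMod 2))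
    (M : Finset (Fin n)) : ℕ :=
  Module.finrank (ZMod 2)
    (↥((stdSymplecticForm n).orthogonal Sig ⊓ coordSubspace M) ⧸
      Submodule.comap ((stdSymplecticForm n).orthogonal Sig ⊓ coordSubspace M).subtype
        (Sig ⊓ coordSubspace M))

/-!
Write `W = Σ^⊥ ∩ V_{M^c}`. Since `V_{M^c} = V_M^⊥`, nondegeneracy gives `W^⊥ = Σ + V_M` and
`(Σ^⊥ ∩ V_M)^⊥ = Σ + V_{M^c}`. Counting dimensions with `dim (A + B) + dim (A ∩ B) = dim A + dim B`
and `dim A^⊥ + dim A = 2n`, the hypothesis `dim (Σ^⊥ ∩ V_M) = dim (Σ ∩ V_M)` makes every term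
involving `V_M` cancel, leaving `dim W - dim (Σ ∩ V_{M^c}) = 2n - 2 dim Σ`. The same count shows
`dim (Σ + W) = 2n - dim Σ = dim Σ^⊥`, so `Σ + W = Σ^⊥`: this is the cleaning statement.
-/

open Module

namespace LinearMap.BilinForm

variable {K V : Type*} [Field K] [AddCommGroup V] [Module K V] {B : LinearMap.BilinForm K V}

theorem orthogonal_sup (W₁ W₂ : Submodule K V) :
    B.orthogonal (W₁ ⊔ W₂) = B.orthogonal W₁ ⊓ B.orthogonal W₂ :=
  le_antisymm (le_inf (orthogonal_le le_sup_left) (orthogonal_le le_sup_right))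
    fun _ ⟨h₁, h₂⟩ => (sup_le h₁ h₂ : W₁ ⊔ W₂ ≤ LinearMap.ker (B.flip _))

variable [FiniteDimensional K V]

theorem finrank_orthogonal_add_finrank (hB : B.Nondegenerate) (W : Submodule K V) :
    finrank K (B.orthogonal W) + finrank K W = finrank K V := by
  rw [finrank_orthogonal hB, Nat.sub_add_cancel W.finrank_le]

theorem finrank_orthogonal_inf_orthogonal_add_two_mul (hB : B.Nondegenerate) (hB₀ : B.IsRefl)
    {S U : Submodule K V} (hU : B.orthogonal S ⊓ U = S ⊓ U) :
    finrank K ↥(B.orthogonal S ⊓ B.orthogonal U) + 2 * finrank K S =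
      finrank K ↥(S ⊓ B.orthogonal U) + finrank K V := by
  have hSU := Submodule.finrank_sup_add_finrank_inf_eq S U
  have hSU' := finrank_orthogonal_add_finrank hB (S ⊔ U)
  have hSW := Submodule.finrank_sup_add_finrank_inf_eq S (B.orthogonal U)
  have hSW' := finrank_orthogonal_add_finrank hB (S ⊔ B.orthogonal U)
  have hUW := finrank_orthogonal_add_finrank hB U
  rw [orthogonal_sup] at hSU'
  rw [orthogonal_sup, orthogonal_orthogonal hB hB₀, hU] at hSW'
  omega

theorem sup_orthogonal_inf_orthogonal_eq (hB : B.Nondegenerate) (hB₀ : B.IsRefl)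
    {S U : Submodule K V} (hS : S ≤ B.orthogonal S) (hU : B.orthogonal S ⊓ U = S ⊓ U) :
    S ⊔ (B.orthogonal S ⊓ B.orthogonal U) = B.orthogonal S := by
  refine Submodule.eq_of_le_of_finrank_le (sup_le hS inf_le_left) ?_
  have hsup := Submodule.finrank_sup_add_finrank_inf_eq S (B.orthogonal S ⊓ B.orthogonal U)
  rw [← inf_assoc, inf_eq_left.mpr hS] at hsup
  have hcount := finrank_orthogonal_inf_orthogonal_add_two_mul hB hB₀ hU
  have hS' := finrank_orthogonal_add_finrank hB S
  omega

end LinearMap.BilinForm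

theorem Submodule.finrank_quotient_comap_subtype_add_finrank {K V : Type*} [Field K]
    [AddCommGroup V] [Module K V] [FiniteDimensional K V] {S W : Submodule K V} (h : S ≤ W) :
    finrank K (W ⧸ S.comap W.subtype) + finrank K S = finrank K W := by
  rw [← (Submodule.comapSubtypeEquivOfLe h).finrank_eq]
  exact Submodule.finrank_quotient_add_finrank _

section StdSymplecticForm

variable {n : ℕ}

theorem stdSymplecticForm_apply (u v : Fin n ⊕ Fin n → ZMod 2) :
    stdSymplecticForm n u v = ∑ x, u x * v x.swap := by
  simp [stdSymplecticForm, Matrix.toLinearMap₂'_apply, Fintype.sum_sum_type, Matrix.one_apply]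

theorem stdSymplecticForm_comm (u v : Fin n ⊕ Fin n → ZMod 2) :
    stdSymplecticForm n u v = stdSymplecticForm n v u := by
  rw [stdSymplecticForm_apply, stdSymplecticForm_apply,
    ← (Equiv.sumComm (Fin n) (Fin n)).sum_comp]
  simp [mul_comm]

theorem stdSymplecticForm_isRefl : (stdSymplecticForm n).IsRefl := fun u v h => by
  rwa [stdSymplecticForm_comm]

theorem stdSymplecticForm_single_left (x : Fin n ⊕ Fin n) (v : Fin n ⊕ Fin n → ZMod 2) :
    stdSymplecticForm n (Pi.single x 1) v = v x.swap := by
  simp [stdSymplecticForm_apply, Pi.single_apply]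

theorem stdSymplecticForm_nondegenerate : (stdSymplecticForm n).Nondegenerate := by
  refine stdSymplecticForm_isRefl.nondegenerate_iff_separatingLeft.mpr
    fun u hu => funext fun x => ?_
  have hx := hu (Pi.single x.swap 1)
  rwa [stdSymplecticForm_comm, stdSymplecticForm_single_left, Sum.swap_swap] at hx

/-- `Sum.elim id id x` is the qubit on which the coordinate `x` lives. -/
theorem mem_coordSubspace {M : Finset (Fin n)} {v : Fin n ⊕ Fin n → ZMod 2} :
    v ∈ coordSubspace M ↔ ∀ x, Sum.elim id id x ∉ M → v x = 0 := by
  simp [coordSubspace, Submodule.mem_iInf, Sum.forall, imp_and, forall_and]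

theorem single_mem_coordSubspace {M : Finset (Fin n)} {x : Fin n ⊕ Fin n}
    (hx : Sum.elim id id x ∈ M) : Pi.single x (1 : ZMod 2) ∈ coordSubspace M :=
  mem_coordSubspace.mpr fun _ hy => Pi.single_eq_of_ne (by rintro rfl; exact hy hx) 1

theorem orthogonal_coordSubspace (M : Finset (Fin n)) :
    (stdSymplecticForm n).orthogonal (coordSubspace M) = coordSubspace Mᶜ := by
  have elim_swap (x : Fin n ⊕ Fin n) : Sum.elim id id x.swap = Sum.elim id id x := by
    cases x <;> rfl
  ext v
  simp only [LinearMap.BilinForm.mem_orthogonal_iff, mem_coordSubspace (M := Mᶜ),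
    Finset.mem_compl, not_not]
  constructor
  · intro h x hx
    have hx' := h _ (single_mem_coordSubspace (x := x.swap) (by rwa [elim_swap]))
    rwa [stdSymplecticForm_single_left, Sum.swap_swap] at hx'
  · intro h u hu
    rw [mem_coordSubspace] at hu
    rw [stdSymplecticForm_apply]
    refine Finset.sum_eq_zero fun x _ => ?_
    by_cases hx : Sum.elim id id x ∈ M
    · rw [h x.swap (by rwa [elim_swap]), mul_zero]
    · rw [hu x hx, zero_mul]

end StdSymplecticForm

/-- Cleaning lemma: if the region `M` is correctable (`Σ^⊥ ∩ V_M = Σ ∩ V_M`),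
then `ℓ_{M^c} = 2k`, and every class of logical operators in `Σ^⊥/Σ` has a
representative supported on `M^c`. -/
theorem cleaning_lemma {n : ℕ}
    (Sig : Submodule (ZMod 2) (Fin n ⊕ Fin n → ZMod 2))
    (hiso : ∀ x ∈ Sig, ∀ y ∈ Sig, stdSymplecticForm n x y = 0)
    (M : Finset (Fin n))
    (hcorr : (stdSymplecticForm n).orthogonal Sig ⊓ coordSubspace M =
      Sig ⊓ coordSubspace M) :
    numLogical Sig Mᶜ = 2 * (n - Module.finrank (ZMod 2) Sig) ∧
    ∀ v ∈ (stdSymplecticForm n).orthogonal Sig,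
      ∃ w ∈ (stdSymplecticForm n).orthogonal Sig ⊓ coordSubspace Mᶜ, v - w ∈ Sig := by
  have hS : Sig ≤ (stdSymplecticForm n).orthogonal Sig := fun x hx y hy => hiso y hy x hx
  have hB := stdSymplecticForm_nondegenerate (n := n)
  have hB₀ := stdSymplecticForm_isRefl (n := n)
  have hcount :=
    LinearMap.BilinForm.finrank_orthogonal_inf_orthogonal_add_two_mul hB hB₀ hcorr
  have hclean := LinearMap.BilinForm.sup_orthogonal_inf_orthogonal_eq hB hB₀ hS hcorr
  rw [orthogonal_coordSubspace] at hcount hclean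
  have hquot := Submodule.finrank_quotient_comap_subtype_add_finrank
    (inf_le_inf_right (coordSubspace Mᶜ) hS)
  have hdim : finrank (ZMod 2) (Fin n ⊕ Fin n → ZMod 2) = n + n := by simp
  refine ⟨by unfold numLogical; omega, fun v hv => ?_⟩
  obtain ⟨s, hs, w, hw, rfl⟩ := Submodule.mem_sup.mp (hclean ▸ hv)
  exact ⟨w, hw, by simpa using hs⟩
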